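/- Let u, v be positive integers with uv ≡ 4 or 8 (mod 12) and v ≡ 0 (mod 2). Then the maximum number Φ of base blocks of a strictly v-cyclic 3-(u×v,4,1) packing satisfies Φ ≤ ⌊(C(uv,3) − uv)/(4v)⌋ = ⌊(u/24)·(u²v²−3uv−4)⌋ = ⌊(u/4)·(⌊((uv−1)/3)·⌊(uv−2)/2⌋⌋ − 1)⌋. -/
import Mathlib


/-- Shift a block of `I_u × Z_v` by `δ ∈ Z_v` in the second coordinate. -/
def shiftBlock {u v : ℕ} (δ : ZMod v) (B : Finset (Fin u × ZMod v)) :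
    Finset (Fin u × ZMod v) :=
  B.image fun p => (p.1, p.2 + δ)

/-- A strictly `v`-cyclic `3-(u × v, 4, 1)` packing, given by its base blocks. -/
structure StrictlyCyclicPacking (u v : ℕ) where
  base : Finset (Finset (Fin u × ZMod v))
  card4 : ∀ B ∈ base, B.card = 4
  orbitInj : ∀ B₁ ∈ base, ∀ B₂ ∈ base, ∀ δ₁ δ₂ : ZMod v,
    shiftBlock δ₁ B₁ = shiftBlock δ₂ B₂ → B₁ = B₂ ∧ δ₁ = δ₂
  packs : ∀ T : Finset (Fin u × ZMod v), T.card = 3 →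
    ∀ B₁ ∈ base, ∀ B₂ ∈ base, ∀ δ₁ δ₂ : ZMod v,
      T ⊆ shiftBlock δ₁ B₁ → T ⊆ shiftBlock δ₂ B₂ → B₁ = B₂ ∧ δ₁ = δ₂

open Finset

-- pairing lemma
lemma card_eq_two_mul_pairs {α : Type*} [DecidableEq α] (s : Finset α) (ι : α → α)
    (hmem : ∀ x ∈ s, ι x ∈ s) (hinv : ∀ x, ι (ι x) = x) (hne : ∀ x, ι x ≠ x) :
    s.card = 2 * (s.image (fun x => ({x, ι x} : Finset α))).card := by
  rw [Finset.card_eq_sum_card_fiberwise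
    (f := fun x => ({x, ι x} : Finset α))
    (t := s.image (fun x => ({x, ι x} : Finset α)))
    (fun x hx => Finset.mem_image_of_mem _ hx)]
  rw [Finset.sum_congr rfl (fun p hp => ?_), Finset.sum_const, smul_eq_mul, Nat.mul_comm]
  obtain ⟨x₀, hx₀s, rfl⟩ := Finset.mem_image.mp hp
  have hfib : s.filter (fun a => ({a, ι a} : Finset α) = {x₀, ι x₀}) = {x₀, ι x₀} := by
    ext y
    simp only [Finset.mem_filter, Finset.mem_insert, Finset.mem_singleton]
    constructor
    · rintro ⟨hys, hy⟩
      have : y ∈ ({x₀, ι x₀} : Finset α) := hy ▸ (by simp)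
      simpa using this
    · rintro (rfl | rfl)
      · exact ⟨hx₀s, rfl⟩
      · refine ⟨hmem _ hx₀s, ?_⟩
        rw [hinv]
        exact Finset.pair_comm _ _
  rw [hfib, Finset.card_insert_of_notMem (by simp [Ne.symm (hne x₀)]), Finset.card_singleton]

-- counting supersets of a fixed p inside powersetCard (p.card+1)
lemma filter_powersetCard_card {α : Type*} [DecidableEq α] (s p : Finset α) (hps : p ⊆ s) :
    ((s.powersetCard (p.card + 1)).filter (fun T => p ⊆ T)).card = s.card - p.card := by
  have himg : (s.powersetCard (p.card + 1)).filter (fun T => p ⊆ T)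
      = (s \ p).image (fun y => insert y p) := by
    ext T
    simp only [Finset.mem_filter, Finset.mem_image, Finset.mem_sdiff,
      Finset.mem_powersetCard]
    constructor
    · rintro ⟨⟨hTs, hT3⟩, hpT⟩
      have hcs : (T \ p).card = 1 := by
        rw [Finset.card_sdiff_of_subset hpT, hT3]
        omega
      obtain ⟨y, hy⟩ := Finset.card_eq_one.mp hcs
      have hymem : y ∈ T \ p := hy ▸ Finset.mem_singleton_self y
      refine ⟨y, ⟨hTs (Finset.mem_sdiff.mp hymem).1, (Finset.mem_sdiff.mp hymem).2⟩, ?_⟩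
      have hT : T = p ∪ (T \ p) := by
        rw [Finset.union_sdiff_of_subset hpT]
      rw [hT, hy, Finset.union_comm, ← Finset.insert_eq]
    · rintro ⟨y, ⟨hys, hyp⟩, rfl⟩
      refine ⟨⟨Finset.insert_subset hys hps, ?_⟩, Finset.subset_insert _ _⟩
      rw [Finset.card_insert_of_notMem hyp]
  rw [himg, Finset.card_image_of_injOn, Finset.card_sdiff_of_subset hps]
  intro y₁ h₁ y₂ h₂ he
  simp only at he
  have : y₁ ∈ insert y₂ p := he ▸ Finset.mem_insert_self y₁ p
  rcases Finset.mem_insert.mp this with h | h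
  · exact h
  · exact absurd h (Finset.mem_sdiff.mp h₁).2

lemma arith_case (u v m : ℕ) (hv : 0 < v)
    (hchoose : (u * v).choose 3 = u * v * m + u * v)
    (hM : u ^ 2 * v ^ 2 - 3 * (u * v) - 4 = 6 * m)
    (hthird : (u * v - 1) * ((u * v - 2) / 2) / 3 - 1 = m) :
    (Nat.choose (u * v) 3 - u * v) / (4 * v) =
        u * (u ^ 2 * v ^ 2 - 3 * (u * v) - 4) / 24 ∧
      u * (u ^ 2 * v ^ 2 - 3 * (u * v) - 4) / 24 =
        u * ((u * v - 1) * ((u * v - 2) / 2) / 3 - 1) / 4 := by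
  have h1 : (u * v).choose 3 - u * v = (u * m) * v := by
    rw [hchoose, Nat.add_sub_cancel]; ring
  have h2 : u * (u ^ 2 * v ^ 2 - 3 * (u * v) - 4) / 24 = u * m / 4 := by
    rw [hM, show u * (6 * m) = (u * m) * 6 by ring, show (24 : ℕ) = 4 * 6 by norm_num,
      Nat.mul_div_mul_right _ _ (by norm_num)]
  refine ⟨?_, ?_⟩
  · rw [h1, h2, Nat.mul_div_mul_right _ _ hv]
  · rw [h2, hthird]
lemma card_shiftBlock {u v : ℕ} (δ : ZMod v) (B : Finset (Fin u × ZMod v)) :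
    (shiftBlock δ B).card = B.card := by
  apply Finset.card_image_of_injective
  intro p q hpq
  simp only [Prod.mk.injEq] at hpq
  exact Prod.ext hpq.1 (by have := hpq.2; exact add_right_cancel this)

lemma shift_mem {u v : ℕ} {δ c : ZMod v} {B : Finset (Fin u × ZMod v)}
    {x : Fin u × ZMod v} (hx : x ∈ shiftBlock δ B) :
    (x.1, x.2 + c) ∈ shiftBlock (δ + c) B := by
  obtain ⟨q, hq, he⟩ := Finset.mem_image.mp hx
  exact Finset.mem_image.mpr ⟨q, hq, by rw [← he]; simp [add_assoc]⟩

lemma main_bound {u v : ℕ} (hv : 0 < v) (hveven : v % 2 = 0)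
    (hn4 : u * v % 4 = 0) (P : StrictlyCyclicPacking u v) :
    4 * v * P.base.card + u * v ≤ (u * v).choose 3 := by
  haveI : NeZero v := ⟨hv.ne'⟩
  classical
  set h : ZMod v := ((v / 2 : ℕ) : ZMod v) with hh
  have hh0 : h ≠ 0 := by
    rw [hh, Ne, ZMod.natCast_eq_zero_iff]
    intro hd
    have := Nat.le_of_dvd (by omega) hd
    omega
  have hhh : h + h = 0 := by
    rw [hh, ← Nat.cast_add, show v / 2 + v / 2 = v by omega, ZMod.natCast_self]
  set φ : Fin u × ZMod v → Fin u × ZMod v := fun x => (x.1, x.2 + h) with hφ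
  have φinv : ∀ x, φ (φ x) = x := by
    intro x
    simp only [hφ]
    exact Prod.ext rfl (by rw [add_assoc, hhh, add_zero])
  have φne : ∀ x, φ x ≠ x := by
    intro x hx
    apply hh0
    have := congrArg Prod.snd hx
    simp only [hφ] at this
    exact by
      have h2 : x.2 + h = x.2 + 0 := by rw [add_zero]; exact this
      exact add_left_cancel h2
  have φpair : ∀ x, ({φ x, φ (φ x)} : Finset (Fin u × ZMod v)) = {x, φ x} := by
    intro x; rw [φinv, Finset.pair_comm]
  -- covered triples
  set fam : Finset (Fin u × ZMod v) × ZMod v → Finset (Finset (Fin u × ZMod v)) :=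
    fun q => (shiftBlock q.2 q.1).powersetCard 3 with hfam
  set covered : Finset (Finset (Fin u × ZMod v)) :=
    (P.base ×ˢ (Finset.univ : Finset (ZMod v))).biUnion fam with hcov
  have hdisj : ∀ q₁ ∈ P.base ×ˢ (Finset.univ : Finset (ZMod v)),
      ∀ q₂ ∈ P.base ×ˢ (Finset.univ : Finset (ZMod v)), q₁ ≠ q₂ →
      Disjoint (fam q₁) (fam q₂) := by
    intro q₁ h₁ q₂ h₂ hne
    rw [Finset.disjoint_left]
    intro T hT1 hT2
    rw [hfam, Finset.mem_powersetCard] at hT1 hT2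
    have := P.packs T hT1.2 q₁.1 (Finset.mem_product.mp h₁).1 q₂.1
      (Finset.mem_product.mp h₂).1 q₁.2 q₂.2 hT1.1 hT2.1
    exact hne (Prod.ext this.1 this.2)
  have hcovcard : covered.card = P.base.card * v * 4 := by
    rw [hcov, Finset.card_biUnion hdisj]
    rw [Finset.sum_congr rfl (fun q hq => ?_), Finset.sum_const, smul_eq_mul,
      Finset.card_product, Finset.card_univ, ZMod.card]
    rw [hfam]
    simp only
    rw [Finset.card_powersetCard, card_shiftBlock, P.card4 _ (Finset.mem_product.mp hq).1]
    decide
  set allT : Finset (Finset (Fin u × ZMod v)) :=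
    (Finset.univ : Finset (Fin u × ZMod v)).powersetCard 3 with hallT
  have hcardΩ : (Finset.univ : Finset (Fin u × ZMod v)).card = u * v := by
    rw [Finset.card_univ, Fintype.card_prod, Fintype.card_fin, ZMod.card]
  have hallTcard : allT.card = (u * v).choose 3 := by
    rw [hallT, Finset.card_powersetCard, hcardΩ]
  have hsub : covered ⊆ allT := by
    intro T hT
    obtain ⟨q, _, hTq⟩ := Finset.mem_biUnion.mp hT
    rw [hfam, Finset.mem_powersetCard] at hTq
    rw [hallT, Finset.mem_powersetCard]
    exact ⟨Finset.subset_univ _, hTq.2⟩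
  set Leave : Finset (Finset (Fin u × ZMod v)) := allT \ covered with hLv
  have hLeq : Leave.card + covered.card = allT.card := Finset.card_sdiff_add_card_eq_card hsub
  -- leave lower bound
  set S : Finset (Fin u × ZMod v) → Finset (Finset (Fin u × ZMod v)) :=
    fun p => Leave.filter (fun T => p ⊆ T) with hS
  set Pp : Finset (Finset (Fin u × ZMod v)) :=
    (Finset.univ : Finset (Fin u × ZMod v)).image (fun x => ({x, φ x} : Finset _)) with hPp
  have hPpcard : u * v = 2 * Pp.card := by
    have := card_eq_two_mul_pairs (Finset.univ : Finset (Fin u × ZMod v)) φ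
      (fun x _ => Finset.mem_univ _) φinv φne
    rw [hcardΩ] at this
    exact this
  -- Step A : each pair has at least two uncovered triples
  have hS2 : ∀ x : Fin u × ZMod v, 2 ≤ (S ({x, φ x} : Finset _)).card := by
    intro x
    have hu' : 0 < u := x.1.pos
    have hn4' : 4 ≤ u * v := by
      have : 0 < u * v := Nat.mul_pos hu' hv
      omega
    set p : Finset (Fin u × ZMod v) := {x, φ x} with hp
    have hpcard : p.card = 2 := by
      rw [hp, Finset.card_insert_of_notMem (by simp [Ne.symm (φne x)]),
        Finset.card_singleton]
    have hTall : (allT.filter (fun T => p ⊆ T)).card = u * v - 2 := by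
      have := filter_powersetCard_card (Finset.univ : Finset (Fin u × ZMod v)) p
        (Finset.subset_univ p)
      rw [hpcard, hcardΩ] at this
      rw [hallT]
      exact this
    set Cp : Finset (Finset (Fin u × ZMod v)) := covered.filter (fun T => p ⊆ T) with hCp
    have hCpsub : Cp ⊆ allT.filter (fun T => p ⊆ T) := by
      intro T hT
      rw [hCp, Finset.mem_filter] at hT
      exact Finset.mem_filter.mpr ⟨hsub hT.1, hT.2⟩
    have hSpcard : (S p).card = (allT.filter (fun T => p ⊆ T)).card - Cp.card := by
      have : S p = allT.filter (fun T => p ⊆ T) \ Cp := by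
        ext T
        simp only [hS, hLv, hCp, Finset.mem_filter, Finset.mem_sdiff]
        tauto
      rw [this, Finset.card_sdiff_of_subset hCpsub]
    -- 4 ∣ Cp.card
    set Bp : Finset (Finset (Fin u × ZMod v) × ZMod v) :=
      (P.base ×ˢ (Finset.univ : Finset (ZMod v))).filter
        (fun q => p ⊆ shiftBlock q.2 q.1) with hBp
    have hCpUnion : Cp = Bp.biUnion (fun q => (fam q).filter (fun T => p ⊆ T)) := by
      ext T
      simp only [hCp, hcov, Finset.mem_filter, Finset.mem_biUnion]
      constructor
      · rintro ⟨⟨q, hq, hTq⟩, hpT⟩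
        refine ⟨q, ?_, hTq, hpT⟩
        rw [hBp, Finset.mem_filter]
        refine ⟨hq, ?_⟩
        rw [hfam, Finset.mem_powersetCard] at hTq
        exact hpT.trans hTq.1
      · rintro ⟨q, hq, hTq, hpT⟩
        exact ⟨⟨q, (Finset.mem_filter.mp hq).1, hTq⟩, hpT⟩
    have hdisj2 : ∀ q₁ ∈ Bp, ∀ q₂ ∈ Bp, q₁ ≠ q₂ →
        Disjoint ((fam q₁).filter (fun T => p ⊆ T)) ((fam q₂).filter (fun T => p ⊆ T)) := by
      intro q₁ h₁ q₂ h₂ hne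
      exact Finset.disjoint_filter_filter
        (hdisj q₁ (Finset.mem_filter.mp h₁).1 q₂ (Finset.mem_filter.mp h₂).1 hne)
    have hpart2 : ∀ q ∈ Bp, ((fam q).filter (fun T => p ⊆ T)).card = 2 := by
      intro q hq
      rw [hBp, Finset.mem_filter] at hq
      have hblk : (shiftBlock q.2 q.1).card = 4 := by
        rw [card_shiftBlock, P.card4 _ (Finset.mem_product.mp hq.1).1]
      have := filter_powersetCard_card (shiftBlock q.2 q.1) p hq.2
      rw [hpcard, hblk] at this
      rw [hfam]
      exact this
    have hCpcard : Cp.card = 2 * Bp.card := by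
      rw [hCpUnion, Finset.card_biUnion hdisj2, Finset.sum_congr rfl hpart2,
        Finset.sum_const, smul_eq_mul, Nat.mul_comm]
    -- Bp even via involution
    have hBpeven : ∃ K, Bp.card = 2 * K := by
      set ι : Finset (Fin u × ZMod v) × ZMod v → Finset (Fin u × ZMod v) × ZMod v :=
        fun q => (q.1, q.2 + h) with hι
      have hmemι : ∀ q ∈ Bp, ι q ∈ Bp := by
        intro q hq
        rw [hBp, Finset.mem_filter] at hq ⊢
        refine ⟨Finset.mem_product.mpr ⟨(Finset.mem_product.mp hq.1).1, Finset.mem_univ _⟩, ?_⟩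
        intro y hy
        rw [hp, Finset.mem_insert, Finset.mem_singleton] at hy
        rcases hy with rfl | rfl
        · -- y = x : x = φ (φ x), φ x ∈ shiftBlock q.2 q.1
          have hx : φ y ∈ shiftBlock q.2 q.1 := hq.2 (by rw [hp]; simp)
          have := shift_mem (c := h) hx
          simp only [hι]
          have he : ((φ y).1, (φ y).2 + h) = y := by
            have := φinv y
            simpa [hφ] using this
          rwa [he] at this
        · -- y = φ x
          have hx : x ∈ shiftBlock q.2 q.1 := hq.2 (by rw [hp]; simp)
          have := shift_mem (c := h) hx
          simpa [hι, hφ] using this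
      have hinvι : ∀ q, ι (ι q) = q := by
        intro q
        simp only [hι]
        exact Prod.ext rfl (by rw [add_assoc, hhh, add_zero])
      have hneι : ∀ q, ι q ≠ q := by
        intro q hq
        apply hh0
        have := congrArg Prod.snd hq
        simp only [hι] at this
        have h2 : q.2 + h = q.2 + 0 := by rw [add_zero]; exact this
        exact add_left_cancel h2
      exact ⟨_, card_eq_two_mul_pairs Bp ι hmemι hinvι hneι⟩
    obtain ⟨K, hK⟩ := hBpeven
    have hCple : Cp.card ≤ u * v - 2 := hTall ▸ Finset.card_le_card hCpsub
    omega
  -- Step B : disjointness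
  have hSdisj : ∀ p₁ ∈ Pp, ∀ p₂ ∈ Pp, p₁ ≠ p₂ → Disjoint (S p₁) (S p₂) := by
    intro p₁ h₁ p₂ h₂ hne
    rw [Finset.disjoint_left]
    intro T hT1 hT2
    obtain ⟨x, -, rfl⟩ := Finset.mem_image.mp h₁
    obtain ⟨y, -, rfl⟩ := Finset.mem_image.mp h₂
    have hpT1 : ({x, φ x} : Finset _) ⊆ T := (Finset.mem_filter.mp hT1).2
    have hpT2 : ({y, φ y} : Finset _) ⊆ T := (Finset.mem_filter.mp hT2).2
    have hT3 : T.card = 3 := by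
      have := (Finset.mem_sdiff.mp (Finset.mem_filter.mp hT1).1).1
      rw [hallT, Finset.mem_powersetCard] at this
      exact this.2
    have hφinj : Function.Injective φ := fun a b hab => by
      rw [← φinv a, hab, φinv]
    have hyx : y ≠ x := by rintro rfl; exact hne rfl
    have hyφx : y ≠ φ x := by
      rintro rfl
      exact hne (φpair x).symm
    have hsub4 : ({x, φ x, y, φ y} : Finset (Fin u × ZMod v)) ⊆ T := by
      intro z hz
      simp only [Finset.mem_insert, Finset.mem_singleton] at hz
      rcases hz with rfl | rfl | rfl | rfl
      · exact hpT1 (by simp)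
      · exact hpT1 (by simp)
      · exact hpT2 (by simp)
      · exact hpT2 (by simp)
    have hc4 : ({x, φ x, y, φ y} : Finset (Fin u × ZMod v)).card = 4 := by
      have d1 : x ≠ φ x := Ne.symm (φne x)
      have d2 : x ≠ y := Ne.symm hyx
      have d3 : x ≠ φ y := by
        rintro rfl
        exact hyφx (φinv y).symm
      have d4 : φ x ≠ y := Ne.symm hyφx
      have d5 : φ x ≠ φ y := fun he => hyx (hφinj he).symm
      have d6 : y ≠ φ y := Ne.symm (φne y)
      rw [Finset.card_insert_of_notMem (by simp [d1, d2, d3]),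
        Finset.card_insert_of_notMem (by simp [d4, d5]),
        Finset.card_insert_of_notMem (by simp [d6]), Finset.card_singleton]
    have := Finset.card_le_card hsub4
    omega
  -- Step C : conclusion
  have hunion : Pp.biUnion S ⊆ Leave := by
    apply Finset.biUnion_subset.mpr
    intro p _
    exact Finset.filter_subset _ _
  have hsum : u * v ≤ (Pp.biUnion S).card := by
    rw [Finset.card_biUnion hSdisj]
    calc u * v = 2 * Pp.card := hPpcard
    _ = ∑ _p ∈ Pp, 2 := by rw [Finset.sum_const, smul_eq_mul, Nat.mul_comm]
    _ ≤ ∑ p ∈ Pp, (S p).card := by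
        apply Finset.sum_le_sum
        intro p hp
        obtain ⟨x, -, rfl⟩ := Finset.mem_image.mp hp
        exact hS2 x
  have hleave : u * v ≤ Leave.card := hsum.trans (Finset.card_le_card hunion)
  have hfinal : 4 * v * P.base.card = P.base.card * v * 4 := by ring
  omega

theorem stmt_8 (u v : ℕ) (hu : 0 < u) (hv : 0 < v)
    (hmod : u * v % 12 = 4 ∨ u * v % 12 = 8) (hveven : v % 2 = 0) :
    (∀ P : StrictlyCyclicPacking u v,
        P.base.card ≤ (Nat.choose (u * v) 3 - u * v) / (4 * v)) ∧
      (Nat.choose (u * v) 3 - u * v) / (4 * v) =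
        u * (u ^ 2 * v ^ 2 - 3 * (u * v) - 4) / 24 ∧
      u * (u ^ 2 * v ^ 2 - 3 * (u * v) - 4) / 24 =
        u * ((u * v - 1) * ((u * v - 2) / 2) / 3 - 1) / 4 := by
  have hn4 : u * v % 4 = 0 := by omega
  have harith : (Nat.choose (u * v) 3 - u * v) / (4 * v) =
        u * (u ^ 2 * v ^ 2 - 3 * (u * v) - 4) / 24 ∧
      u * (u ^ 2 * v ^ 2 - 3 * (u * v) - 4) / 24 =
        u * ((u * v - 1) * ((u * v - 2) / 2) / 3 - 1) / 4 := by
    have hd : (u * v).descFactorial 3 = (u * v - 2) * ((u * v - 1) * (u * v)) := by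
      simp [Nat.descFactorial_succ, Nat.descFactorial_zero]
    rcases hmod with h4 | h8
    · obtain ⟨k, hk⟩ : ∃ k, u * v = 12 * k + 4 := ⟨u * v / 12, by omega⟩
      have e1 : u * v - 1 = 12 * k + 3 := by omega
      have e2 : u * v - 2 = 12 * k + 2 := by omega
      apply arith_case u v (24 * k * k + 10 * k) hv
      · rw [Nat.choose_eq_descFactorial_div_factorial, hd, e1, e2, hk,
          show Nat.factorial 3 = 6 from rfl,
          show (12 * k + 2) * ((12 * k + 3) * (12 * k + 4)) =
            6 * ((12 * k + 4) * (24 * k * k + 10 * k) + (12 * k + 4)) by ring,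
          Nat.mul_div_cancel_left _ (by norm_num)]
      · have e3 : u ^ 2 * v ^ 2 = (u * v) * (u * v) := by ring
        rw [e3, hk]
        have e4 : (12 * k + 4) * (12 * k + 4) =
            3 * (12 * k + 4) + 4 + 6 * (24 * k * k + 10 * k) := by ring
        omega
      · have e5 : (u * v - 2) / 2 = 6 * k + 1 := by omega
        rw [e1, e5, show (12 * k + 3) * (6 * k + 1) = 3 * (24 * k * k + 10 * k + 1) by ring,
          Nat.mul_div_cancel_left _ (by norm_num)]
        omega
    · obtain ⟨k, hk⟩ : ∃ k, u * v = 12 * k + 8 := ⟨u * v / 12, by omega⟩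
      have e1 : u * v - 1 = 12 * k + 7 := by omega
      have e2 : u * v - 2 = 12 * k + 6 := by omega
      apply arith_case u v (24 * k * k + 26 * k + 6) hv
      · rw [Nat.choose_eq_descFactorial_div_factorial, hd, e1, e2, hk,
          show Nat.factorial 3 = 6 from rfl,
          show (12 * k + 6) * ((12 * k + 7) * (12 * k + 8)) =
            6 * ((12 * k + 8) * (24 * k * k + 26 * k + 6) + (12 * k + 8)) by ring,
          Nat.mul_div_cancel_left _ (by norm_num)]
      · have e3 : u ^ 2 * v ^ 2 = (u * v) * (u * v) := by ring
        rw [e3, hk]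
        have e4 : (12 * k + 8) * (12 * k + 8) =
            3 * (12 * k + 8) + 4 + 6 * (24 * k * k + 26 * k + 6) := by ring
        omega
      · have e5 : (u * v - 2) / 2 = 6 * k + 3 := by omega
        rw [e1, e5, show (12 * k + 7) * (6 * k + 3) = 3 * (24 * k * k + 26 * k + 6 + 1) by ring,
          Nat.mul_div_cancel_left _ (by norm_num)]
        omega
  refine ⟨fun P => ?_, harith⟩
  have hmb := main_bound hv hveven hn4 P
  rw [Nat.le_div_iff_mul_le (by omega : 0 < 4 * v)]
  have hcomm : P.base.card * (4 * v) = 4 * v * P.base.card := by ring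
  omega
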